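/- arXiv:2309.06569 — 2 statements merged into one kernel-verified Lean document; each statement's English description precedes it below -/
import Mathlib

section
/- For fixed σ > 0 and a closed interval [a,b] with midpoint c = (a+b)/2, the function μ ↦ h([a,b], μ, σ) is monotone nonincreasing in |μ - c|; that is, if |μ₁ - c| ≤ |μ₂ - c| then h([a,b], μ₂, σ) ≤ h([a,b], μ₁, σ). -/
open MeasureTheory ProbabilityTheory Real Set

noncomputable def erf (x : ℝ) : ℝ := (2 / Real.sqrt Real.pi) * ∫ t in (0:ℝ)..x, Real.exp (-t^2)

noncomputable def h (a b μ σ : ℝ) : ℝ :=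
  (1/2) * (erf ((b - μ) / Real.sqrt (2*σ)) - erf ((a - μ) / Real.sqrt (2*σ)))

/-!
`h a b μ σ` is `1/√π` times the integral of `exp (-t²)` over a window of fixed half-width
`L = (b - a) / (2√(2σ))` centred at `(c - μ) / √(2σ)`. For an even function that decreases in
`|t|`, such a window integral decreases as the centre moves away from `0`: moving the window
from `m₁ ≥ 0` to `m₂ ≥ m₁` trades the mass on `[m₁ - L, m₂ - L]` for that on its translate by
`2L`, where `|t + 2L| ≥ |t|`.
-/

section Window

variable {f : ℝ → ℝ}

theorem integral_window_neg (hf : ∀ x y, |x| ≤ |y| → f y ≤ f x) (L m : ℝ) :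
    ∫ t in (-m - L)..(-m + L), f t = ∫ t in (m - L)..(m + L), f t := by
  have heven : ∀ x, f (-x) = f x := fun x =>
    le_antisymm (hf _ _ (abs_neg x).ge) (hf _ _ (abs_neg x).le)
  calc ∫ t in (-m - L)..(-m + L), f t = ∫ t in -(m + L)..-(m - L), f t := by ring_nf
    _ = ∫ t in (m - L)..(m + L), f (-t) := (intervalIntegral.integral_comp_neg f).symm
    _ = ∫ t in (m - L)..(m + L), f t := by simp only [heven]

theorem integral_window_le_of_le (hcont : Continuous f) (hf : ∀ x y, |x| ≤ |y| → f y ≤ f x)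
    {L : ℝ} (hL : 0 ≤ L) {m₁ m₂ : ℝ} (hm₁ : 0 ≤ m₁) (hm : m₁ ≤ m₂) :
    ∫ t in (m₂ - L)..(m₂ + L), f t ≤ ∫ t in (m₁ - L)..(m₁ + L), f t := by
  have hint : ∀ u v, IntervalIntegrable f volume u v := hcont.intervalIntegrable
  have hdiff := intervalIntegral.integral_interval_sub_interval_comm
    (hint (m₁ - L) (m₁ + L)) (hint (m₂ - L) (m₂ + L)) (hint (m₁ - L) (m₂ - L))
  have hshift : ∫ t in (m₁ - L)..(m₂ - L), f (t + 2 * L) = ∫ t in (m₁ + L)..(m₂ + L), f t := by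
    rw [intervalIntegral.integral_comp_add_right f (2 * L)]
    congr 1 <;> ring
  have hle : ∫ t in (m₁ - L)..(m₂ - L), f (t + 2 * L) ≤ ∫ t in (m₁ - L)..(m₂ - L), f t := by
    refine intervalIntegral.integral_mono_on (by linarith)
      ((hcont.comp (continuous_add_const _)).intervalIntegrable _ _) (hint _ _) fun t ht => hf _ _ ?_
    have ht' : -L ≤ t := by linarith [ht.1]
    rw [abs_of_nonneg (show 0 ≤ t + 2 * L by linarith), abs_le]
    constructor <;> linarith
  linarith

theorem integral_window_le_of_abs_le (hcont : Continuous f)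
    (hf : ∀ x y, |x| ≤ |y| → f y ≤ f x) {L : ℝ} (hL : 0 ≤ L) {m₁ m₂ : ℝ} (hm : |m₁| ≤ |m₂|) :
    ∫ t in (m₂ - L)..(m₂ + L), f t ≤ ∫ t in (m₁ - L)..(m₁ + L), f t := by
  have habs : ∀ m, ∫ t in (m - L)..(m + L), f t = ∫ t in (|m| - L)..(|m| + L), f t := by
    intro m
    rcases abs_cases m with ⟨hsign, -⟩ | ⟨hsign, -⟩ <;> rw [hsign]
    exact (integral_window_neg hf L m).symm
  rw [habs m₁, habs m₂]
  exact integral_window_le_of_le hcont hf hL (abs_nonneg m₁) hm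

end Window

theorem erf_sub_erf (x y : ℝ) :
    erf y - erf x = 2 / √π * ∫ t in x..y, exp (-t ^ 2) := by
  have hcont : Continuous fun t : ℝ => exp (-t ^ 2) := by fun_prop
  rw [erf, erf, ← mul_sub, intervalIntegral.integral_interval_sub_left
    (hcont.intervalIntegrable 0 y) (hcont.intervalIntegrable 0 x)]

theorem h_eq_integral_window (a b μ σ : ℝ) :
    h a b μ σ = 1 / √π * ∫ t in ((a + b) / 2 - μ) / √(2 * σ) - (b - a) / (2 * √(2 * σ))..
      ((a + b) / 2 - μ) / √(2 * σ) + (b - a) / (2 * √(2 * σ)), exp (-t ^ 2) := by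
  rw [h, erf_sub_erf]
  ring_nf

theorem stmt2_general (a b σ : ℝ) (hab : a ≤ b) (c : ℝ) (hc : c = (a + b) / 2)
    (μ₁ μ₂ : ℝ) (hd : |μ₁ - c| ≤ |μ₂ - c|) : h a b μ₂ σ ≤ h a b μ₁ σ := by
  subst hc
  rw [h_eq_integral_window, h_eq_integral_window]
  gcongr 1 / √π * ?_
  refine integral_window_le_of_abs_le (by fun_prop) (fun x y hxy => ?_)
    (div_nonneg (sub_nonneg.mpr hab) (by positivity)) ?_
  · exact exp_le_exp.mpr (neg_le_neg (sq_le_sq.mpr hxy))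
  · rw [abs_div, abs_div, abs_sub_comm, abs_sub_comm _ μ₂]
    gcongr

theorem stmt2 (a b σ : ℝ) (hσ : 0 < σ) (hab : a ≤ b) (c : ℝ) (hc : c = (a + b) / 2)
    (μ₁ μ₂ : ℝ) (hd : |μ₁ - c| ≤ |μ₂ - c|) : h a b μ₂ σ ≤ h a b μ₁ σ :=
  stmt2_general a b σ hab c hc μ₁ μ₂ hd
end

section
/- For fixed μ ∈ ℝ, a closed interval [a,b] with a ≤ b, and 0 < σ₁ ≤ σ₂, it holds that h([a,b], μ, σ) ≥ min(h([a,b], μ, σ₁), h([a,b], μ, σ₂)) for all σ ∈ [σ₁, σ₂]; i.e., the minimum over a variance interval of the Gaussian mass of a fixed interval is attained at an endpoint of the variance interval. -/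
open MeasureTheory ProbabilityTheory Real Set

/-! The derivative of `σ ↦ h a b μ σ` is a positive multiple of
`gaussMoment σ (a - μ) - gaussMoment σ (b - μ)`, where `gaussMoment σ t = t * exp (-t ^ 2 / (2 * σ))`.
For `0 < A ≤ B` the inequality `gaussMoment σ B ≤ gaussMoment σ A` reads
`B ≤ A * exp ((B ^ 2 - A ^ 2) / (2 * σ))`, whose right side decreases in `σ`; the case `B < 0`
follows since `gaussMoment σ` is odd, and `A ≤ 0 ≤ B` is degenerate. Hence the derivative, once
nonnegative, stays nonnegative for all smaller `σ`: it changes sign at most once, from `+` to `-`,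
and `h` is quasiconcave in `σ`. -/

theorem quasiconcaveOn_of_hasDerivAt {s : Set ℝ} (hs : s.OrdConnected) {f f' : ℝ → ℝ}
    (hf : ∀ x ∈ s, HasDerivAt f (f' x) x)
    (hcross : ∀ x ∈ s, ∀ y ∈ s, x ≤ y → 0 ≤ f' y → 0 ≤ f' x) :
    QuasiconcaveOn ℝ s f := by
  intro r
  rw [convex_iff_ordConnected]
  refine ⟨fun x hx y hy z hz => ⟨hs.out hx.1 hy.1 hz, ?_⟩⟩
  have hderiv : ∀ I ⊆ Icc x y, ∀ w ∈ interior I, HasDerivWithinAt f (f' w) (interior I) w :=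
    fun I hI w hw => (hf w (hs.out hx.1 hy.1 (hI (interior_subset hw)))).hasDerivWithinAt
  have hcont : ∀ I ⊆ Icc x y, ContinuousOn f I :=
    fun I hI w hw => (hf w (hs.out hx.1 hy.1 (hI hw))).continuousAt.continuousWithinAt
  by_cases hnonneg : ∀ w ∈ Icc x z, 0 ≤ f' w
  · have hsub : Icc x z ⊆ Icc x y := Icc_subset_Icc_right hz.2
    have hmono : MonotoneOn f (Icc x z) :=
      monotoneOn_of_hasDerivWithinAt_nonneg (convex_Icc x z) (hcont _ hsub) (hderiv _ hsub)
        fun w hw => hnonneg w (interior_subset hw)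
    exact hx.2.trans (hmono (left_mem_Icc.2 hz.1) (right_mem_Icc.2 hz.1) hz.1)
  · push Not at hnonneg
    obtain ⟨w, hw, hw_neg⟩ := hnonneg
    have hsub : Icc z y ⊆ Icc x y := Icc_subset_Icc_left hz.1
    have hnonpos : ∀ v ∈ Icc z y, f' v ≤ 0 := fun v hv => not_lt.1 fun hv_pos =>
      hw_neg.not_ge <| hcross w (hs.out hx.1 hy.1 ⟨hw.1, hw.2.trans hz.2⟩) v
        (hs.out hx.1 hy.1 (hsub hv)) (hw.2.trans hv.1) hv_pos.le
    have hanti : AntitoneOn f (Icc z y) :=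
      antitoneOn_of_hasDerivWithinAt_nonpos (convex_Icc z y) (hcont _ hsub) (hderiv _ hsub)
        fun v hv => hnonpos v (interior_subset hv)
    exact hy.2.trans (hanti (left_mem_Icc.2 hz.2) (right_mem_Icc.2 hz.2) hz.2)

noncomputable def gaussMoment (σ t : ℝ) : ℝ := t * exp (-t ^ 2 / (2 * σ))

theorem gaussMoment_neg (σ t : ℝ) : gaussMoment σ (-t) = -gaussMoment σ t := by
  simp [gaussMoment]

theorem gaussMoment_nonneg_iff (σ t : ℝ) : 0 ≤ gaussMoment σ t ↔ 0 ≤ t :=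
  mul_nonneg_iff_of_pos_right (exp_pos _)

theorem gaussMoment_le_of_pos {A B x y : ℝ} (hA : 0 < A) (hAB : A ≤ B) (hx : 0 < x)
    (hxy : x ≤ y) (hy : gaussMoment y B ≤ gaussMoment y A) :
    gaussMoment x B ≤ gaussMoment x A := by
  have hsplit : ∀ σ, gaussMoment σ A
      = A * exp ((B ^ 2 - A ^ 2) / (2 * σ)) * exp (-B ^ 2 / (2 * σ)) := fun σ => by
    rw [gaussMoment, mul_assoc, ← exp_add]
    ring_nf
  rw [gaussMoment, hsplit] at hy ⊢
  have hy' : B ≤ A * exp ((B ^ 2 - A ^ 2) / (2 * y)) := le_of_mul_le_mul_right hy (exp_pos _)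
  have hx' : B ≤ A * exp ((B ^ 2 - A ^ 2) / (2 * x)) := by
    refine hy'.trans (mul_le_mul_of_nonneg_left (exp_le_exp.2 ?_) hA.le)
    exact div_le_div_of_nonneg_left (by nlinarith) (by positivity) (by linarith)
  exact mul_le_mul_of_nonneg_right hx' (exp_pos _).le

theorem gaussMoment_le_of_le {A B x y : ℝ} (hAB : A ≤ B) (hx : 0 < x) (hxy : x ≤ y)
    (hy : gaussMoment y B ≤ gaussMoment y A) : gaussMoment x B ≤ gaussMoment x A := by
  rcases lt_or_ge 0 A with hA | hA
  · exact gaussMoment_le_of_pos hA hAB hx hxy hy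
  rcases lt_or_ge B 0 with hB | hB
  · have := gaussMoment_le_of_pos (A := -B) (B := -A) (by linarith) (by linarith) hx hxy
      (by simpa only [gaussMoment_neg, neg_le_neg_iff] using hy)
    simpa only [gaussMoment_neg, neg_le_neg_iff] using this
  -- For `A ≤ 0 ≤ B` the moments have opposite signs, so `hy` forces `A = B = 0`.
  obtain rfl : A = 0 := le_antisymm hA <| (gaussMoment_nonneg_iff y A).1 <|
    ((gaussMoment_nonneg_iff y B).2 hB).trans hy
  have hyB : gaussMoment y B ≤ 0 := by simpa [gaussMoment] using hy
  obtain rfl : B = 0 := le_antisymm (neg_nonneg.1 <| (gaussMoment_nonneg_iff y (-B)).1 <| by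
    rw [gaussMoment_neg]; linarith) hB
  exact le_rfl

theorem hasDerivAt_erf (x : ℝ) : HasDerivAt erf (2 / sqrt π * exp (-x ^ 2)) x := by
  have hc : Continuous fun t : ℝ => exp (-t ^ 2) := by fun_prop
  exact (intervalIntegral.integral_hasDerivAt_right (hc.intervalIntegrable 0 x)
    hc.aestronglyMeasurable.stronglyMeasurableAtFilter hc.continuousAt).const_mul _

theorem hasDerivAt_div_sqrt_two_mul (c : ℝ) {σ : ℝ} (hσ : 0 < σ) :
    HasDerivAt (fun s => c / sqrt (2 * s)) (-c / (2 * σ * sqrt (2 * σ))) σ := by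
  have h2σ : 0 < 2 * σ := by positivity
  have hsqrt : HasDerivAt (fun s => sqrt (2 * s)) (1 / (2 * sqrt (2 * σ)) * 2) σ :=
    (hasDerivAt_sqrt h2σ.ne').comp σ ((hasDerivAt_id σ).const_mul 2 |>.congr_deriv (mul_one 2))
  refine ((hasDerivAt_const σ c).div hsqrt (sqrt_pos.2 h2σ).ne').congr_deriv ?_
  rw [sq_sqrt h2σ.le]
  field_simp
  ring

theorem hasDerivAt_erf_div_sqrt_two_mul (c : ℝ) {σ : ℝ} (hσ : 0 < σ) :
    HasDerivAt (fun s => erf (c / sqrt (2 * s)))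
      (-(2 / sqrt π) * gaussMoment σ c / (2 * σ * sqrt (2 * σ))) σ := by
  refine ((hasDerivAt_erf _).comp σ (hasDerivAt_div_sqrt_two_mul c hσ)).congr_deriv ?_
  rw [div_pow, sq_sqrt (by positivity : (0 : ℝ) ≤ 2 * σ), gaussMoment, neg_div (2 * σ) (c ^ 2)]
  ring

theorem hasDerivAt_h (a b μ : ℝ) {σ : ℝ} (hσ : 0 < σ) :
    HasDerivAt (h a b μ)
      ((gaussMoment σ (a - μ) - gaussMoment σ (b - μ)) / (sqrt π * (2 * σ) * sqrt (2 * σ))) σ := by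
  refine (((hasDerivAt_erf_div_sqrt_two_mul (b - μ) hσ).sub
    (hasDerivAt_erf_div_sqrt_two_mul (a - μ) hσ)).const_mul (1 / 2)).congr_deriv ?_
  have : sqrt π ≠ 0 := (sqrt_pos.2 pi_pos).ne'
  field_simp
  ring

theorem quasiconcaveOn_h (a b μ : ℝ) (hab : a ≤ b) : QuasiconcaveOn ℝ (Ioi 0) (h a b μ) := by
  have hden : ∀ σ : ℝ, 0 < σ → 0 < sqrt π * (2 * σ) * sqrt (2 * σ) := fun σ hσ => by positivity
  refine quasiconcaveOn_of_hasDerivAt ordConnected_Ioi (fun σ hσ => hasDerivAt_h a b μ hσ) ?_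
  intro x hx y hy hxy hfy
  rw [le_div_iff₀ (hden x hx), zero_mul, sub_nonneg]
  rw [le_div_iff₀ (hden y hy), zero_mul, sub_nonneg] at hfy
  exact gaussMoment_le_of_le (by linarith) hx hxy hfy

theorem stmt4 (a b μ σ₁ σ₂ σ : ℝ) (hab : a ≤ b) (h1 : 0 < σ₁) (h12 : σ₁ ≤ σ₂)
    (hσ : σ ∈ Set.Icc σ₁ σ₂) : min (h a b μ σ₁) (h a b μ σ₂) ≤ h a b μ σ := by
  have hlevel := (quasiconcaveOn_h a b μ hab (min (h a b μ σ₁) (h a b μ σ₂))).ordConnected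
  exact (hlevel.out ⟨h1, min_le_left _ _⟩ ⟨h1.trans_le h12, min_le_right _ _⟩ hσ).2
end
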